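/- Let F ⊆ K[x_1,...,x_n] be a finite family with max deg(f_i) = t and d_reg(F) < t. Then there exists a family F' ⊆ V_{F,t} such that (F') = (F), no leading term of an element of F' divides the leading term of another (with respect to a fixed degree-compatible term order), and max deg(f') ≤ d_reg(F') ≤ d_reg(F) for all f' ∈ F'. -/

import Mathlib

open MvPolynomial

noncomputable section

/-- The total degree of a monomial exponent vector. -/
def mdeg {n : ℕ} (s : Fin n →₀ ℕ) : ℕ := s.sum fun _ e => e

/-- The top homogeneous component (homogeneous part of largest degree) of a polynomial. -/
def topPart {n : ℕ} {K : Type*} [CommSemiring K] (f : MvPolynomial (Fin n) K) :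
    MvPolynomial (Fin n) K :=
  homogeneousComponent f.totalDegree f

/-- `regAt F d` says that the degree-`d` part of the ideal generated by the top homogeneous
parts of the elements of `F` is all of `K[x₁,…,xₙ]_d`; the degree of regularity of `F` is the
least such `d`. -/
def regAt {n : ℕ} {K : Type*} [Field K] (F : Finset (MvPolynomial (Fin n) K)) (d : ℕ) : Prop :=
  ∀ p : MvPolynomial (Fin n) K, p.IsHomogeneous d →
    p ∈ Ideal.span (topPart '' (F : Set (MvPolynomial (Fin n) K)))

/-- `V F d` : the smallest `K`-linear subspace containing all elements of `F` of total degree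
at most `d`, and closed under multiplication by monomials as long as the degree stays `≤ d`. -/
def V {n : ℕ} {K : Type*} [Field K] (F : Finset (MvPolynomial (Fin n) K)) (d : ℕ) :
    Submodule K (MvPolynomial (Fin n) K) :=
  sInf {W | (∀ f ∈ F, f.totalDegree ≤ d → f ∈ W) ∧
    ∀ (s : Fin n →₀ ℕ), ∀ f ∈ W,
      (monomial s (1 : K) * f).totalDegree ≤ d → monomial s (1 : K) * f ∈ W}

/-- The leading monomial (exponent vector) of `f` with respect to a monomial order. -/
def lm {n : ℕ} {K : Type*} [Field K] (m : MonomialOrder (Fin n))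
    (f : MvPolynomial (Fin n) K) : Fin n →₀ ℕ :=
  m.toSyn.symm (f.support.sup fun s => m.toSyn s)

/-- A monomial order is degree-compatible if monomials of smaller degree are smaller. -/
def DegCompatible {n : ℕ} (m : MonomialOrder (Fin n)) : Prop :=
  ∀ s t : Fin n →₀ ℕ, mdeg s < mdeg t → m.toSyn s < m.toSyn t

/-- `G` is a Gröbner basis of `I` w.r.t. `m` : `G ⊆ I` and the leading monomial of every
nonzero element of `I` is divisible by the leading monomial of some nonzero element of `G`. -/
def IsGrobnerBasis {n : ℕ} {K : Type*} [Field K] (m : MonomialOrder (Fin n))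
    (I : Ideal (MvPolynomial (Fin n) K)) (G : Finset (MvPolynomial (Fin n) K)) : Prop :=
  (↑G : Set (MvPolynomial (Fin n) K)) ⊆ ↑I ∧
    ∀ f ∈ I, f ≠ 0 → ∃ g ∈ G, g ≠ 0 ∧ lm m g ≤ lm m f

/-- `G` is the reduced Gröbner basis: a Gröbner basis, monic, and no monomial occurring in an
element of `G` is divisible by the leading monomial of another element of `G`. -/
def IsReducedGB {n : ℕ} {K : Type*} [Field K] (m : MonomialOrder (Fin n))
    (I : Ideal (MvPolynomial (Fin n) K)) (G : Finset (MvPolynomial (Fin n) K)) : Prop :=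
  IsGrobnerBasis m I G ∧ (∀ g ∈ G, coeff (lm m g) g = 1) ∧
    ∀ g ∈ G, ∀ g' ∈ G, g ≠ g' → ∀ s ∈ g.support, ¬ lm m g' ≤ s

/-! Let `L` be the set of leading monomials of nonzero elements of `V = V F t`, `t = max deg fᵢ`;
it is finite because `V` lives in degree `≤ t`, and `F'` picks one element of `V` for each minimal
element of `L`. Dividing an element of `V` by `F'`, all partial products stay in `V` (the order is
degree-compatible), so the remainder lies in `V`; it has no monomial divisible by a leading
monomial of `F'`, so it is zero, for otherwise its own leading monomial would lie in `L`.
Hence `V ⊆ (F')`, and since the division never raises the degree, the top part of every element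
of `V` lies in the ideal of top parts of `F'`. Conversely, for a family inside `V` and `e ≤ t`,
the degree-`e` part of any element of the ideal of its top parts is the degree-`e` part of an
element of `V` of degree `≤ e`, because multiplying such a lift by a monomial keeps it in `V`. For `e = d_reg(F)` this gives `regAt F' d`; and every monomial of degree `d_reg(F')`
lies in `L`, so a minimal element of `L` cannot have larger degree. -/

open scoped MonomialOrder

theorem homogeneousComponent_monomial_mul {σ R : Type*} [CommSemiring R] (e : ℕ)
    (s : σ →₀ ℕ) (a : R) (p : MvPolynomial σ R) :
    homogeneousComponent e (monomial s a * p) =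
      if s.degree ≤ e then monomial s a * homogeneousComponent (e - s.degree) p else 0 := by
  ext b
  by_cases hsb : s ≤ b
  · have hb : (b - s).degree + s.degree = b.degree := by
      rw [← map_add, tsub_add_cancel_of_le hsb]
    split_ifs <;>
      simp only [coeff_homogeneousComponent, coeff_monomial_mul', coeff_zero, hsb, if_true] <;>
      split_ifs <;> first | rfl | (exfalso; omega) | simp
  · split_ifs <;> simp [coeff_homogeneousComponent, coeff_monomial_mul', hsb]

theorem totalDegree_monomial_mul_le {σ R : Type*} [CommSemiring R] (s : σ →₀ ℕ) (a : R)
    (p : MvPolynomial σ R) :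
    (monomial s a * p).totalDegree ≤ s.degree + p.totalDegree :=
  (totalDegree_mul _ _).trans (Nat.add_le_add_right (totalDegree_monomial_le s a) _)

section MonomialOrder

variable {n : ℕ} {R : Type*} [CommSemiring R] {m : MonomialOrder (Fin n)}

theorem lm_eq_degree {K : Type*} [Field K] (f : MvPolynomial (Fin n) K) :
    lm m f = m.degree f := rfl

theorem DegCompatible.degree_le_of_toSyn_le (hm : DegCompatible m) {a b : Fin n →₀ ℕ}
    (h : a ≼[m] b) : a.degree ≤ b.degree :=
  not_lt.mp fun hlt => (hm b a hlt).not_ge h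

theorem DegCompatible.totalDegree_eq (hm : DegCompatible m) (f : MvPolynomial (Fin n) R) :
    f.totalDegree = (m.degree f).degree := by
  refine le_antisymm (Finset.sup_le fun b hb => hm.degree_le_of_toSyn_le (m.le_degree hb)) ?_
  rcases eq_or_ne f 0 with rfl | hf
  · simp
  · exact le_totalDegree (m.degree_mem_support hf)

theorem DegCompatible.totalDegree_le_of_degree_le (hm : DegCompatible m)
    {p f : MvPolynomial (Fin n) R} (h : m.degree p ≼[m] m.degree f) :
    p.totalDegree ≤ f.totalDegree := by
  rw [hm.totalDegree_eq p, hm.totalDegree_eq f]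
  exact hm.degree_le_of_toSyn_le h

theorem DegCompatible.degree_eq_of_homogeneousComponent_eq (hm : DegCompatible m)
    {w : MvPolynomial (Fin n) R} {u : Fin n →₀ ℕ} {c : R} (hc : c ≠ 0)
    (hw : w.totalDegree ≤ u.degree) (hwu : homogeneousComponent u.degree w = monomial u c) :
    m.degree w = u := by
  have hcoeff : ∀ b : Fin n →₀ ℕ, b.degree = u.degree →
      coeff b w = coeff b (monomial u c) :=
    fun b hb => by rw [← hwu, coeff_homogeneousComponent, if_pos hb]
  have hu : u ∈ w.support := by
    rwa [mem_support_iff, hcoeff u rfl, coeff_monomial, if_pos rfl]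
  refine m.toSyn.injective (le_antisymm (m.degree_le_iff.mpr fun b hb => ?_) (m.le_degree hu))
  rcases (le_totalDegree hb |>.trans hw).lt_or_eq with hlt | heq
  · exact (hm b u hlt).le
  · have hbu : coeff b (monomial u c) ≠ 0 := hcoeff b heq ▸ mem_support_iff.mp hb
    rw [coeff_monomial] at hbu
    rw [(ite_ne_right_iff.mp hbu).1]

end MonomialOrder

theorem exists_finset_minimal_degrees {σ R : Type*} [CommSemiring R] (m : MonomialOrder σ)
    {S : Set (MvPolynomial σ R)} (hS : (m.degree '' (S \ {0})).Finite) :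
    ∃ G : Finset (MvPolynomial σ R),
      ↑G ⊆ S \ {0} ∧ Set.InjOn m.degree (G : Set (MvPolynomial σ R)) ∧
      (∀ g ∈ G, Minimal (· ∈ m.degree '' (S \ {0})) (m.degree g)) ∧
      ∀ v ∈ S \ {0}, ∃ g ∈ G, m.degree g ≤ m.degree v := by
  classical
  set L := m.degree '' (S \ {0})
  have hrep : ∀ u ∈ L, ∃ v, v ∈ S \ {0} ∧ m.degree v = u := fun _ hu => hu
  choose! rep hrepS hrepdeg using hrep
  have hmin : {u | Minimal (· ∈ L) u}.Finite := hS.subset fun _ hu => hu.prop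
  refine ⟨hmin.toFinset.image rep, ?_, ?_, ?_, fun v hv => ?_⟩
  · intro g hg
    obtain ⟨u, hu, rfl⟩ := Finset.mem_image.mp hg
    exact hrepS u (hmin.mem_toFinset.mp hu).prop
  · intro g hg g' hg' hgg'
    obtain ⟨u, hu, rfl⟩ := Finset.mem_image.mp hg
    obtain ⟨u', hu', rfl⟩ := Finset.mem_image.mp hg'
    rw [hrepdeg u (hmin.mem_toFinset.mp hu).prop, hrepdeg u' (hmin.mem_toFinset.mp hu').prop]
      at hgg'
    rw [hgg']
  · intro g hg
    obtain ⟨u, hu, rfl⟩ := Finset.mem_image.mp hg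
    rw [hrepdeg u (hmin.mem_toFinset.mp hu).prop]
    exact hmin.mem_toFinset.mp hu
  · obtain ⟨u, hule, humin⟩ :=
      exists_minimal_le_of_wellFoundedLT (· ∈ L) (m.degree v) ⟨v, hv, rfl⟩
    refine ⟨rep u, Finset.mem_image_of_mem rep (hmin.mem_toFinset.mpr humin), ?_⟩
    rwa [hrepdeg u humin.prop]

theorem Minimal.degree_le {σ : Type*} {L : Set (σ →₀ ℕ)} {u : σ →₀ ℕ}
    (hu : Minimal (· ∈ L) u) {e : ℕ} (hL : ∀ w : σ →₀ ℕ, w.degree = e → w ∈ L) :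
    u.degree ≤ e := by
  by_contra! h
  obtain ⟨w, hwu, hw⟩ := u.exists_le_degree_eq e h.le
  rw [hu.eq_of_le (hL w hw) hwu] at hw
  omega

section V

variable {n : ℕ} {K : Type*} [Field K] {F : Finset (MvPolynomial (Fin n) K)} {t : ℕ}

theorem mem_V {f : MvPolynomial (Fin n) K} (hf : f ∈ F) (hd : f.totalDegree ≤ t) :
    f ∈ V F t :=
  Submodule.mem_sInf.mpr fun _ hW => hW.1 f hf hd

theorem monomial_mul_mem_V {f : MvPolynomial (Fin n) K} (hf : f ∈ V F t) (s : Fin n →₀ ℕ)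
    (a : K) (hd : s.degree + f.totalDegree ≤ t) : monomial s a * f ∈ V F t := by
  have hs : monomial s (1 : K) * f ∈ V F t := Submodule.mem_sInf.mpr fun W hW =>
    hW.2 s f (Submodule.mem_sInf.mp hf W hW) ((totalDegree_monomial_mul_le s 1 f).trans hd)
  rw [show monomial s a * f = a • (monomial s 1 * f) by
    rw [← smul_mul_assoc, smul_monomial, smul_eq_mul, mul_one]]
  exact Submodule.smul_mem _ a hs

theorem totalDegree_le_of_mem_V {f : MvPolynomial (Fin n) K} (hf : f ∈ V F t) :
    f.totalDegree ≤ t :=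
  (mem_restrictTotalDegree _ _ _).mp <| Submodule.mem_sInf.mp hf _
    ⟨fun _ _ hd => (mem_restrictTotalDegree _ _ _).mpr hd,
      fun _ _ _ hd => (mem_restrictTotalDegree _ _ _).mpr hd⟩

theorem mem_span_of_mem_V {f : MvPolynomial (Fin n) K} (hf : f ∈ V F t) :
    f ∈ Ideal.span (F : Set (MvPolynomial (Fin n) K)) :=
  Submodule.mem_sInf.mp hf ((Ideal.span _).restrictScalars K)
    ⟨fun _ hf _ => Ideal.subset_span hf, fun _ _ hf _ => Ideal.mul_mem_left _ _ hf⟩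

theorem mul_mem_V {b : MvPolynomial (Fin n) K} (hb : b ∈ V F t) (q : MvPolynomial (Fin n) K)
    (hd : (b * q).totalDegree ≤ t) : b * q ∈ V F t := by
  rcases eq_or_ne b 0 with rfl | hb0
  · simp
  rcases eq_or_ne q 0 with rfl | hq0
  · simp
  rw [totalDegree_mul_of_isDomain hb0 hq0] at hd
  rw [q.as_sum, Finset.mul_sum]
  refine Submodule.sum_mem _ fun s hs => ?_
  have hs : s.degree ≤ q.totalDegree := le_totalDegree hs
  rw [mul_comm]
  exact monomial_mul_mem_V hb s _ (by omega)

variable (F t) in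
theorem finite_degree_image_V {m : MonomialOrder (Fin n)} (hm : DegCompatible m) :
    (m.degree '' ((V F t : Set (MvPolynomial (Fin n) K)) \ {0})).Finite :=
  (Finsupp.finite_of_degree_le t).subset <| by
    rintro _ ⟨v, ⟨hv, -⟩, rfl⟩
    exact (hm.totalDegree_eq v).symm.trans_le (totalDegree_le_of_mem_V hv)

end V

section TopPart

variable {n : ℕ} {R : Type*} [CommSemiring R]

theorem homogeneousComponent_mem_span_topPart {G : Set (MvPolynomial (Fin n) R)}
    {g : MvPolynomial (Fin n) R} (hg : g ∈ G) {k : ℕ} (hk : g.totalDegree ≤ k) :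
    homogeneousComponent k g ∈ Ideal.span (topPart '' G) := by
  rcases hk.lt_or_eq with hlt | rfl
  · rw [homogeneousComponent_eq_zero _ _ hlt]
    exact Submodule.zero_mem _
  · exact Ideal.subset_span ⟨g, hg, rfl⟩

theorem homogeneousComponent_mul_mem_span_topPart [IsDomain R]
    {G : Set (MvPolynomial (Fin n) R)} {g : MvPolynomial (Fin n) R} (hg : g ∈ G)
    (q : MvPolynomial (Fin n) R) {D : ℕ} (hD : (g * q).totalDegree ≤ D) :
    homogeneousComponent D (g * q) ∈ Ideal.span (topPart '' G) := by
  rcases eq_or_ne g 0 with rfl | hg0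
  · simp
  rcases eq_or_ne q 0 with rfl | hq0
  · simp
  rw [totalDegree_mul_of_isDomain hg0 hq0] at hD
  rw [q.as_sum, Finset.mul_sum, map_sum]
  refine Ideal.sum_mem _ fun s hs => ?_
  have hs : s.degree ≤ q.totalDegree := le_totalDegree hs
  rw [mul_comm, homogeneousComponent_monomial_mul, if_pos (by omega)]
  exact Ideal.mul_mem_left _ _ (homogeneousComponent_mem_span_topPart hg (by omega))

end TopPart

section Lift

variable {n : ℕ} {K : Type*} [Field K] {F : Finset (MvPolynomial (Fin n) K)} {t : ℕ}

def LiftsComponents (F : Finset (MvPolynomial (Fin n) K)) (t : ℕ)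
    (x : MvPolynomial (Fin n) K) : Prop :=
  ∀ e ≤ t, ∃ w ∈ V F t,
    w.totalDegree ≤ e ∧ homogeneousComponent e w = homogeneousComponent e x

theorem liftsComponents_topPart {g : MvPolynomial (Fin n) K} (hg : g ∈ V F t) :
    LiftsComponents F t (topPart g) := by
  intro e _
  by_cases he : e = g.totalDegree
  · subst he
    exact ⟨g, hg, le_rfl, (homogeneousComponent_eq_self
      (homogeneousComponent_isHomogeneous _ _)).symm⟩
  · refine ⟨0, Submodule.zero_mem _, by simp, ?_⟩
    rw [map_zero, topPart, homogeneousComponent_of_mem (homogeneousComponent_mem _ _), if_neg he]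

theorem LiftsComponents.add {x y : MvPolynomial (Fin n) K} (hx : LiftsComponents F t x)
    (hy : LiftsComponents F t y) : LiftsComponents F t (x + y) := by
  intro e he
  obtain ⟨w, hwV, hwd, hw⟩ := hx e he
  obtain ⟨w', hw'V, hw'd, hw'⟩ := hy e he
  exact ⟨w + w', Submodule.add_mem _ hwV hw'V,
    (totalDegree_add _ _).trans (max_le hwd hw'd), by rw [map_add, map_add, hw, hw']⟩

theorem LiftsComponents.monomial_mul {x : MvPolynomial (Fin n) K} (hx : LiftsComponents F t x)
    (s : Fin n →₀ ℕ) (a : K) : LiftsComponents F t (monomial s a * x) := by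
  intro e he
  rw [homogeneousComponent_monomial_mul]
  split_ifs with hs
  · obtain ⟨w, hwV, hwd, hw⟩ := hx (e - s.degree) (by omega)
    refine ⟨monomial s a * w, monomial_mul_mem_V hwV s a (by omega),
      (totalDegree_monomial_mul_le s a w).trans (by omega), ?_⟩
    rw [homogeneousComponent_monomial_mul, if_pos hs, hw]
  · exact ⟨0, Submodule.zero_mem _, by simp, by simp⟩

theorem LiftsComponents.mul_left {x : MvPolynomial (Fin n) K} (hx : LiftsComponents F t x)
    (c : MvPolynomial (Fin n) K) : LiftsComponents F t (c * x) := by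
  induction c using MvPolynomial.induction_on' with
  | monomial s a => exact hx.monomial_mul s a
  | add p q hp hq => exact add_mul p q x ▸ hp.add hq

theorem liftsComponents_of_mem_span_topPart {G : Finset (MvPolynomial (Fin n) K)}
    (hG : ∀ g ∈ G, g ∈ V F t) {p : MvPolynomial (Fin n) K}
    (hp : p ∈ Ideal.span (topPart '' (G : Set (MvPolynomial (Fin n) K)))) :
    LiftsComponents F t p := by
  induction hp using Submodule.span_induction with
  | mem x hx =>
    obtain ⟨g, hg, rfl⟩ := hx
    exact liftsComponents_topPart (hG g hg)
  | zero => exact fun e _ => ⟨0, Submodule.zero_mem _, by simp, rfl⟩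
  | add x y _ _ hx hy => exact hx.add hy
  | smul c x _ hx => exact hx.mul_left c

end Lift

section Reduction

variable {n : ℕ} {K : Type*} [Field K] {F : Finset (MvPolynomial (Fin n) K)} {t : ℕ}
  {m : MonomialOrder (Fin n)}

theorem mem_span_and_homogeneousComponent_mem_of_covered (hm : DegCompatible m)
    {G : Finset (MvPolynomial (Fin n) K)}
    (hGV : ∀ g ∈ G, g ∈ V F t) (hG0 : ∀ g ∈ G, g ≠ 0)
    (hcover : ∀ v ∈ V F t, v ≠ 0 → ∃ g ∈ G, m.degree g ≤ m.degree v)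
    {v : MvPolynomial (Fin n) K} (hv : v ∈ V F t) :
    v ∈ Ideal.span (G : Set (MvPolynomial (Fin n) K)) ∧
      ∀ D, v.totalDegree ≤ D → homogeneousComponent D v ∈
        Ideal.span (topPart '' (G : Set (MvPolynomial (Fin n) K))) := by
  set B : Set (MvPolynomial (Fin n) K) := ↑G
  obtain ⟨q, r, hvqr, hdeg, hr⟩ := m.div_set (B := B)
    (fun b hb => (m.leadingCoeff_ne_zero_iff.mpr (hG0 b hb)).isUnit) v
  have hqdeg : ∀ b : B, (b * q b).totalDegree ≤ v.totalDegree :=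
    fun b => hm.totalDegree_le_of_degree_le (hdeg b)
  have hsum : Finsupp.linearCombination _ (fun b : B => (b : MvPolynomial (Fin n) K)) q =
      ∑ b ∈ q.support, b * q b := by
    simp only [Finsupp.linearCombination_apply, Finsupp.sum, smul_eq_mul, mul_comm]
  have hsumV : ∑ b ∈ q.support, (b : MvPolynomial (Fin n) K) * q b ∈ V F t :=
    Submodule.sum_mem _ fun b _ =>
      mul_mem_V (hGV b b.2) _ ((hqdeg b).trans (totalDegree_le_of_mem_V hv))
  have hr0 : r = 0 := by
    by_contra hr0
    have hrV : r ∈ V F t := by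
      rw [hsum] at hvqr
      rw [eq_sub_of_add_eq' hvqr.symm]
      exact Submodule.sub_mem _ hv hsumV
    obtain ⟨b, hb, hle⟩ := hcover r hrV hr0
    exact hr _ (m.degree_mem_support hr0) b hb hle
  rw [hr0, add_zero, hsum] at hvqr
  refine ⟨hvqr ▸ Ideal.sum_mem _ fun b _ => Ideal.mul_mem_right _ _ (Ideal.subset_span b.2),
    fun D hD => ?_⟩
  rw [hvqr, map_sum]
  exact Ideal.sum_mem _ fun b _ =>
    homogeneousComponent_mul_mem_span_topPart b.2 _ ((hqdeg b).trans hD)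

theorem degree_mem_of_regAt (hm : DegCompatible m) {G : Finset (MvPolynomial (Fin n) K)}
    (hGV : ∀ g ∈ G, g ∈ V F t) {e : ℕ} (he : e ≤ t) (hreg : regAt G e)
    {u : Fin n →₀ ℕ} (hu : u.degree = e) :
    u ∈ m.degree '' ((V F t : Set (MvPolynomial (Fin n) K)) \ {0}) := by
  have hmon : (monomial u (1 : K)).IsHomogeneous e := isHomogeneous_monomial 1 hu
  obtain ⟨w, hwV, hwd, hw⟩ := liftsComponents_of_mem_span_topPart hGV (hreg _ hmon) e he
  rw [homogeneousComponent_eq_self hmon] at hw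
  subst hu
  refine ⟨w, ⟨hwV, ?_⟩, hm.degree_eq_of_homogeneousComponent_eq one_ne_zero hwd hw⟩
  rintro rfl
  exact one_ne_zero (monomial_eq_zero.mp (hw.symm.trans (map_zero _)))

theorem regAt_of_covered (hm : DegCompatible m) (hFV : ∀ f ∈ F, f ∈ V F t)
    {d : ℕ} (hd : d ≤ t) (hreg : regAt F d) {G : Finset (MvPolynomial (Fin n) K)}
    (hGV : ∀ g ∈ G, g ∈ V F t) (hG0 : ∀ g ∈ G, g ≠ 0)
    (hcover : ∀ v ∈ V F t, v ≠ 0 → ∃ g ∈ G, m.degree g ≤ m.degree v) :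
    regAt G d := by
  intro p hp
  obtain ⟨w, hwV, hwd, hw⟩ := liftsComponents_of_mem_span_topPart hFV (hreg p hp) d hd
  rw [← homogeneousComponent_eq_self hp, ← hw]
  exact (mem_span_and_homogeneousComponent_mem_of_covered hm hGV hG0 hcover hwV).2 d hwd

end Reduction

/-- The reduction step of Proposition 3.9: if `t = max deg fᵢ` and `d_reg(F) < t`, there is a
family `F' ⊆ V_{F,t}` with `(F') = (F)`, no leading term of an element of `F'` dividing the
leading term of another, and `max deg f' ≤ d_reg(F') ≤ d_reg(F)`. -/
theorem stmt15 {n : ℕ} {K : Type*} [Field K] (F : Finset (MvPolynomial (Fin n) K))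
    (m : MonomialOrder (Fin n)) (hm : DegCompatible m)
    (d : ℕ) (hreg : IsLeast {e | regAt F e} d)
    (hdt : d < F.sup MvPolynomial.totalDegree) :
    ∃ F' : Finset (MvPolynomial (Fin n) K),
      (∀ g ∈ F', g ∈ V F (F.sup MvPolynomial.totalDegree)) ∧
      Ideal.span (F' : Set (MvPolynomial (Fin n) K)) =
        Ideal.span (F : Set (MvPolynomial (Fin n) K)) ∧
      (∀ g ∈ F', ∀ g' ∈ F', g ≠ g' → ¬ lm m g' ≤ lm m g) ∧
      ∃ d' : ℕ, IsLeast {e | regAt F' e} d' ∧ (∀ g ∈ F', g.totalDegree ≤ d') ∧ d' ≤ d := by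
  classical
  set t := F.sup MvPolynomial.totalDegree
  have hFV : ∀ f ∈ F, f ∈ V F t := fun f hf => mem_V hf (Finset.le_sup hf)
  obtain ⟨F', hF', hinj, hmin, hcover⟩ := exists_finset_minimal_degrees m
    (finite_degree_image_V F t hm)
  have hF'V : ∀ g ∈ F', g ∈ V F t := fun g hg => (hF' hg).1
  have hF'0 : ∀ g ∈ F', g ≠ 0 := fun g hg => (hF' hg).2
  have hcover' : ∀ v ∈ V F t, v ≠ 0 → ∃ g ∈ F', m.degree g ≤ m.degree v :=
    fun v hv hv0 => hcover v ⟨hv, hv0⟩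
  have hregF' : regAt F' d := regAt_of_covered hm hFV hdt.le hreg.1 hF'V hF'0 hcover'
  have hex : ∃ e, regAt F' e := ⟨d, hregF'⟩
  have hd' : Nat.find hex ≤ d := Nat.find_min' hex hregF'
  refine ⟨F', hF'V, le_antisymm ?_ ?_, fun g hg g' hg' hne hle => ?_, Nat.find hex,
    ⟨Nat.find_spec hex, fun e he => Nat.find_min' hex he⟩, fun g hg => ?_, hd'⟩
  · exact Ideal.span_le.mpr fun g hg => mem_span_of_mem_V (hF'V g hg)
  · exact Ideal.span_le.mpr fun f hf =>
      (mem_span_and_homogeneousComponent_mem_of_covered hm hF'V hF'0 hcover' (hFV f hf)).1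
  · rw [lm_eq_degree, lm_eq_degree] at hle
    exact hne (hinj hg' hg ((hmin g hg).eq_of_le ⟨g', hF' hg', rfl⟩ hle)).symm
  · rw [hm.totalDegree_eq]
    exact (hmin g hg).degree_le fun u hu =>
      degree_mem_of_regAt hm hF'V (hd'.trans hdt.le) (Nat.find_spec hex) hu
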